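/- arXiv:1411.5735 — 4 statements merged into one kernel-verified Lean document; each statement's English description precedes it below -/
import Mathlib

section
/- The function φ_a(x) = ((a+1)/a)|x| − (a+1)|x|/(a+|x|) is convex on ℝ for every a > 0. -/
open Set

lemma tl1_inv_convex (a : ℝ) (ha : 0 < a) :
    ConvexOn ℝ (Ici (0:ℝ)) (fun t : ℝ => (a + t)⁻¹) := by
  have h1 : ConvexOn ℝ (Ioi (0:ℝ)) (fun x : ℝ => x⁻¹) := by
    have := (strictConvexOn_zpow (m := -1) (by norm_num) (by norm_num)).convexOn
    simpa using this
  have h2 : ConvexOn ℝ (Ici (0:ℝ)) (fun t : ℝ => ((a + t))⁻¹) := by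
    constructor
    · exact convex_Ici 0
    · intro x hx y hy c d hc hd hcd
      have hx' : a + x ∈ Ioi (0:ℝ) := by
        simp only [mem_Ioi]; have := hx; simp only [mem_Ici] at this; linarith
      have hy' : a + y ∈ Ioi (0:ℝ) := by
        simp only [mem_Ioi]; have := hy; simp only [mem_Ici] at this; linarith
      have := h1.2 hx' hy' hc hd hcd
      simp only [smul_eq_mul] at this ⊢
      have heq : a + (c * x + d * y) = c * (a + x) + d * (a + y) := by ring_nf; nlinarith [hcd]
      rw [heq]
      exact this
  exact h2

lemma tl1_g_convex (a : ℝ) (ha : 0 < a) :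
    ConvexOn ℝ (Ici (0:ℝ))
      (fun t : ℝ => (a + 1) / a * t - (a + 1) * t / (a + t)) := by
  have heq : ∀ t ∈ Ici (0:ℝ),
      (a + 1) / a * t - (a + 1) * t / (a + t)
        = ((a + 1) / a * t - (a + 1)) + (a * (a + 1)) * (a + t)⁻¹ := by
    intro t ht
    simp only [mem_Ici] at ht
    have hat : a + t ≠ 0 := by positivity
    field_simp
    ring
  have hlin : ConvexOn ℝ (Ici (0:ℝ)) (fun t : ℝ => (a + 1) / a * t - (a + 1)) := by
    refine ⟨convex_Ici 0, ?_⟩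
    intro x hx y hy c d hc hd hcd
    simp only [smul_eq_mul]
    nlinarith [hcd]
  have hinv := (tl1_inv_convex a ha).smul (c := a * (a + 1)) (by positivity)
  have hsum := hlin.add hinv
  refine ⟨convex_Ici 0, ?_⟩
  intro x hx y hy c d hc hd hcd
  have hmem : c • x + d • y ∈ Ici (0:ℝ) := (convex_Ici 0) hx hy hc hd hcd
  simp only at *
  rw [heq _ hmem, heq _ hx, heq _ hy]
  simpa using hsum.2 hx hy hc hd hcd

lemma tl1_g_mono (a : ℝ) (ha : 0 < a) :
    MonotoneOn (fun t : ℝ => (a + 1) / a * t - (a + 1) * t / (a + t)) (Ici (0:ℝ)) := by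
  intro x hx y hy hxy
  simp only [mem_Ici] at hx hy
  have hax : 0 < a + x := by linarith
  have hay : 0 < a + y := by linarith
  simp only
  rw [← sub_nonneg]
  have key : ((a + 1) / a * y - (a + 1) * y / (a + y)) - ((a + 1) / a * x - (a + 1) * x / (a + x))
      = (a + 1) * ((y - x) * (a * (x + y) + x * y)) / (a * ((a + x) * (a + y))) := by
    field_simp
    ring
  rw [key]
  apply div_nonneg
  · have h1 : 0 ≤ y - x := by linarith
    have h2 : 0 ≤ a * (x + y) + x * y := by nlinarith
    positivity
  · positivity

/-- `φ_a x = ((a+1)/a)|x| − (a+1)|x|/(a+|x|)` is convex on `ℝ`. -/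
theorem tl1_phi_convex (a : ℝ) (ha : 0 < a) :
    ConvexOn ℝ Set.univ
      (fun x : ℝ => (a + 1) / a * |x| - (a + 1) * |x| / (a + |x|)) := by
  have habs : ConvexOn ℝ (univ : Set ℝ) (fun x : ℝ => |x|) := by
    refine ⟨convex_univ, ?_⟩
    intro x _ y _ c d hc hd hcd
    simp only [smul_eq_mul]
    calc |c * x + d * y| ≤ |c * x| + |d * y| := abs_add_le _ _
      _ = c * |x| + d * |y| := by rw [abs_mul, abs_mul, abs_of_nonneg hc, abs_of_nonneg hd]
  have himg : (fun x : ℝ => |x|) '' univ = Ici (0:ℝ) := by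
    ext y
    simp only [image_univ, mem_range, mem_Ici]
    constructor
    · rintro ⟨x, rfl⟩; exact abs_nonneg x
    · intro hy; exact ⟨y, abs_of_nonneg hy⟩
  have := ConvexOn.comp (f := fun x : ℝ => |x|)
    (g := fun t : ℝ => (a + 1) / a * t - (a + 1) * t / (a + t))
    (by rw [himg]; exact tl1_g_convex a ha) habs
    (by rw [himg]; exact tl1_g_mono a ha)
  exact this
end

section
/- Let A be an M×N real matrix, y ∈ ℝ^M, and x* a local minimizer of min { P_a(x) : Ax = y }, where P_a(x) = Σ_i (a+1)|x_i|/(a+|x_i|) with a > 0. Then the columns of A indexed by the support T* = supp(x*) are linearly independent. -/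
private lemma tl1_key (a u d : ℝ) (ha : 0 < a) (hd0 : d ≠ 0) (hd : |d| < u) :
    (a+1)*(u+d)/(a+(u+d)) + (a+1)*(u-d)/(a+(u-d)) < 2*((a+1)*u/(a+u)) := by
  obtain ⟨hd1, hd2⟩ := abs_lt.mp hd
  have h1 : 0 < a + (u+d) := by linarith
  have h2 : 0 < a + (u-d) := by linarith
  have h3 : 0 < a + u := by linarith
  rw [div_add_div _ _ (ne_of_gt h1) (ne_of_gt h2),
    show 2*((a+1)*u/(a+u)) = (2*((a+1)*u))/(a+u) by ring,
    div_lt_div_iff₀ (by positivity) h3]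
  have hdsq : 0 < d^2 := by positivity
  nlinarith [mul_pos h1 h2, mul_pos ha h3, mul_pos (mul_pos ha ha) hdsq,
    mul_pos ha hdsq, mul_pos h3 hdsq]

private lemma tl1_key2 (a u d : ℝ) (ha : 0 < a) (hd0 : d ≠ 0) (hd : |d| < |u|) :
    (a+1)*|u+d|/(a+|u+d|) + (a+1)*|u-d|/(a+|u-d|) < 2*((a+1)*|u|/(a+|u|)) := by
  rcases lt_trichotomy u 0 with hu | hu | hu
  · obtain ⟨h1, h2⟩ := abs_lt.mp (hd.trans_eq (abs_of_neg hu))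
    rw [abs_of_neg hu, abs_of_neg (by linarith : u + d < 0),
      abs_of_neg (by linarith : u - d < 0)]
    have := tl1_key a (-u) (-d) ha (neg_ne_zero.mpr hd0)
      (by rw [abs_neg]; exact hd.trans_eq (abs_of_neg hu))
    convert this using 3 <;> ring
  · exfalso; rw [hu, abs_zero] at hd; exact (abs_nonneg d).not_gt hd
  · obtain ⟨h1, h2⟩ := abs_lt.mp (hd.trans_eq (abs_of_pos hu))
    rw [abs_of_pos hu, abs_of_pos (by linarith : 0 < u + d),
      abs_of_pos (by linarith : 0 < u - d)]
    exact tl1_key a u d ha hd0 (hd.trans_eq (abs_of_pos hu))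

/-- a local minimizer of the constrained TL1 problem has linearly
independent columns of `A` on its support. -/
theorem tl1_constrained_local_min_indep
    (M N : ℕ) (A : Matrix (Fin M) (Fin N) ℝ) (y : Fin M → ℝ)
    (a : ℝ) (ha : 0 < a)
    (Pa : (Fin N → ℝ) → ℝ)
    (hPa : ∀ x, Pa x = ∑ i, (a + 1) * |x i| / (a + |x i|))
    (xstar : Fin N → ℝ) (hfeas : A.mulVec xstar = y)
    (hmin : ∃ ε > 0, ∀ x : Fin N → ℝ, A.mulVec x = y → ‖x - xstar‖ < ε →
      Pa xstar ≤ Pa x) :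
    LinearIndependent ℝ
      (fun i : {i : Fin N // xstar i ≠ 0} => fun j : Fin M => A j i.1) := by
  by_contra hli
  obtain ⟨g, hg0, i₀, hgi₀⟩ := Fintype.not_linearIndependent_iff.mp hli
  obtain ⟨ε, hε, hloc⟩ := hmin
  set v : Fin N → ℝ := fun j => if h : xstar j ≠ 0 then g ⟨j, h⟩ else 0 with hv
  have hvx : ∀ j, v j ≠ 0 → xstar j ≠ 0 := by
    intro j hj
    by_contra h
    simp [hv, h] at hj
  have hvi₀ : v i₀.1 ≠ 0 := by simp [hv, i₀.2, hgi₀]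
  -- v is in the kernel of A
  have hker : A.mulVec v = 0 := by
    funext k
    have hk := congrFun hg0 k
    simp only [Finset.sum_apply, Pi.smul_apply, smul_eq_mul, Pi.zero_apply] at hk
    have hsplit : ∑ j : Fin N, A k j * v j
        = ∑ j : {i : Fin N // xstar i ≠ 0}, A k j.1 * v j.1
          + ∑ j : {i : Fin N // ¬ xstar i ≠ 0}, A k j.1 * v j.1 :=
      (Fintype.sum_subtype_add_sum_subtype _ _).symm
    have h2 : ∑ j : {i : Fin N // ¬ xstar i ≠ 0}, A k j.1 * v j.1 = 0 := by
      apply Finset.sum_eq_zero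
      intro j _
      simp [hv, j.2]
    have h1 : ∑ j : {i : Fin N // xstar i ≠ 0}, A k j.1 * v j.1
        = ∑ j : {i : Fin N // xstar i ≠ 0}, g j * A k j.1 := by
      apply Finset.sum_congr rfl
      intro j _
      simp [hv, j.2, mul_comm]
    simp only [Matrix.mulVec, dotProduct, Pi.zero_apply]
    rw [hsplit, h1, hk, h2, add_zero]
  -- choose small t
  have hS : (Finset.univ.filter (fun i => v i ≠ 0)).Nonempty :=
    ⟨i₀.1, by simp [hvi₀]⟩
  set c : ℝ := (Finset.univ.filter (fun i => v i ≠ 0)).inf' hS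
      (fun i => |xstar i| / (2 * |v i|)) with hc
  have hcpos : 0 < c := by
    rw [hc, Finset.lt_inf'_iff]
    intro i hi
    simp only [Finset.mem_filter] at hi
    have hvine := hi.2
    have hxi := hvx i hvine
    positivity
  set t : ℝ := min (ε / (2 * (‖v‖ + 1))) c with ht
  have hnv : (0:ℝ) < ‖v‖ + 1 := by positivity
  have htpos : 0 < t := lt_min (by positivity) hcpos
  have htv : ∀ i, v i ≠ 0 → |t * v i| < |xstar i| := by
    intro i hvine
    have hxi := hvx i hvine
    have h1 : t ≤ |xstar i| / (2 * |v i|) :=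
      le_trans (min_le_right _ _)
        (Finset.inf'_le _ (by simp [hvine]))
    have hvipos : 0 < |v i| := abs_pos.mpr hvine
    have hxipos : 0 < |xstar i| := abs_pos.mpr hxi
    rw [abs_mul, abs_of_pos htpos]
    calc t * |v i| ≤ (|xstar i| / (2 * |v i|)) * |v i| := by
          exact mul_le_mul_of_nonneg_right h1 hvipos.le
      _ = |xstar i| / 2 := by field_simp
      _ < |xstar i| := by linarith
  have hnorm : ‖t • v‖ < ε := by
    rw [norm_smul, Real.norm_eq_abs, abs_of_pos htpos]
    have h1 : t ≤ ε / (2 * (‖v‖ + 1)) := min_le_left _ _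
    have h2 : ‖v‖ < ‖v‖ + 1 := by linarith
    calc t * ‖v‖ ≤ ε / (2 * (‖v‖ + 1)) * ‖v‖ := by
          exact mul_le_mul_of_nonneg_right h1 (norm_nonneg v)
      _ < ε := by
          rw [div_mul_eq_mul_div, div_lt_iff₀ (by positivity)]
          nlinarith [norm_nonneg v]
  -- feasibility of perturbations
  have hfeas1 : A.mulVec (xstar + t • v) = y := by
    rw [Matrix.mulVec_add, Matrix.mulVec_smul, hker, smul_zero, add_zero, hfeas]
  have hfeas2 : A.mulVec (xstar - t • v) = y := by
    rw [Matrix.mulVec_sub, Matrix.mulVec_smul, hker, smul_zero, sub_zero, hfeas]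
  have hn1 : ‖(xstar + t • v) - xstar‖ < ε := by simpa using hnorm
  have hn2 : ‖(xstar - t • v) - xstar‖ < ε := by
    simpa [norm_neg] using hnorm
  have hle1 := hloc _ hfeas1 hn1
  have hle2 := hloc _ hfeas2 hn2
  -- strict concavity contradiction
  have hkey : Pa (xstar + t • v) + Pa (xstar - t • v) < 2 * Pa xstar := by
    rw [hPa, hPa, hPa, ← Finset.sum_add_distrib, Finset.mul_sum]
    apply Finset.sum_lt_sum
    · intro i _
      by_cases hvi : v i = 0
      · simp only [Pi.add_apply, Pi.sub_apply, Pi.smul_apply, smul_eq_mul, hvi,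
          mul_zero, add_zero, sub_zero]
        linarith
      · have hd := htv i hvi
        have hd0 : t * v i ≠ 0 := mul_ne_zero (ne_of_gt htpos) hvi
        have := tl1_key2 a (xstar i) (t * v i) ha hd0 hd
        simp only [Pi.add_apply, Pi.sub_apply, Pi.smul_apply, smul_eq_mul]
        linarith
    · refine ⟨i₀.1, Finset.mem_univ _, ?_⟩
      have hd := htv i₀.1 hvi₀
      have hd0 : t * v i₀.1 ≠ 0 := mul_ne_zero (ne_of_gt htpos) hvi₀
      have := tl1_key2 a (xstar i₀.1) (t * v i₀.1) ha hd0 hd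
      simp only [Pi.add_apply, Pi.sub_apply, Pi.smul_apply, smul_eq_mul]
      linarith
  linarith
end

section
/- Let A be an M×N real matrix, y ∈ ℝ^M, λ > 0, and x* a local minimizer of f(x) = ½‖Ax − y‖₂² + λ P_a(x) with P_a(x) = Σ_i (a+1)|x_i|/(a+|x_i|), a > 0. Then the columns of A indexed by supp(x*) are linearly independent; in particular ‖x*‖₀ ≤ rank(A). -/
lemma tl1_key_s14 (a c u : ℝ) (ha : 0 < a) (h1 : 0 ≤ c + u) (h2 : 0 ≤ c - u) :
    (a+1)*(c+u)/(a+(c+u)) + (a+1)*(c-u)/(a+(c-u)) ≤ 2*((a+1)*c/(a+c)) := by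
  have d1 : 0 < a + (c + u) := by linarith
  have d2 : 0 < a + (c - u) := by linarith
  have d3 : 0 < a + c := by linarith
  rw [div_add_div _ _ d1.ne' d2.ne', show 2*((a+1)*c/(a+c)) = (2*((a+1)*c))/(a+c) from by ring, div_le_div_iff₀ (mul_pos d1 d2) d3]
  nlinarith [sq_nonneg u, mul_nonneg (mul_nonneg ha.le (by linarith : (0:ℝ) ≤ a+1)) (sq_nonneg u)]

lemma tl1_key_strict (a c u : ℝ) (ha : 0 < a) (h1 : 0 ≤ c + u) (h2 : 0 ≤ c - u) (hu : u ≠ 0) :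
    (a+1)*(c+u)/(a+(c+u)) + (a+1)*(c-u)/(a+(c-u)) < 2*((a+1)*c/(a+c)) := by
  have d1 : 0 < a + (c + u) := by linarith
  have d2 : 0 < a + (c - u) := by linarith
  have d3 : 0 < a + c := by linarith
  rw [div_add_div _ _ d1.ne' d2.ne', show 2*((a+1)*c/(a+c)) = (2*((a+1)*c))/(a+c) from by ring, div_lt_div_iff₀ (mul_pos d1 d2) d3]
  have hu2 : 0 < u^2 := by positivity
  nlinarith [mul_pos (mul_pos ha (by linarith : (0:ℝ) < a+1)) hu2]

lemma tl1_abs (a x s : ℝ) (ha : 0 < a) (hs : |s| ≤ |x|) :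
    (a+1)*|x+s|/(a+|x+s|) + (a+1)*|x-s|/(a+|x-s|) ≤ 2*((a+1)*|x|/(a+|x|)) := by
  rcases le_or_gt 0 x with hx | hx
  · rw [abs_of_nonneg hx] at hs
    obtain ⟨hs1, hs2⟩ := abs_le.mp hs
    rw [abs_of_nonneg hx, abs_of_nonneg (by linarith : (0:ℝ) ≤ x + s),
      abs_of_nonneg (by linarith : (0:ℝ) ≤ x - s)]
    exact tl1_key_s14 a x s ha (by linarith) (by linarith)
  · rw [abs_of_neg hx] at hs
    obtain ⟨hs1, hs2⟩ := abs_le.mp hs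
    rw [abs_of_neg hx, abs_of_nonpos (by linarith : x + s ≤ 0),
      abs_of_nonpos (by linarith : x - s ≤ 0),
      show -(x+s) = -x + -s from by ring, show -(x-s) = -x - -s from by ring]
    exact tl1_key_s14 a (-x) (-s) ha (by linarith) (by linarith)

lemma tl1_abs_strict (a x s : ℝ) (ha : 0 < a) (hs : |s| ≤ |x|) (hs0 : s ≠ 0) :
    (a+1)*|x+s|/(a+|x+s|) + (a+1)*|x-s|/(a+|x-s|) < 2*((a+1)*|x|/(a+|x|)) := by
  rcases le_or_gt 0 x with hx | hx
  · rw [abs_of_nonneg hx] at hs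
    obtain ⟨hs1, hs2⟩ := abs_le.mp hs
    rw [abs_of_nonneg hx, abs_of_nonneg (by linarith : (0:ℝ) ≤ x + s),
      abs_of_nonneg (by linarith : (0:ℝ) ≤ x - s)]
    exact tl1_key_strict a x s ha (by linarith) (by linarith) hs0
  · rw [abs_of_neg hx] at hs
    obtain ⟨hs1, hs2⟩ := abs_le.mp hs
    rw [abs_of_neg hx, abs_of_nonpos (by linarith : x + s ≤ 0),
      abs_of_nonpos (by linarith : x - s ≤ 0),
      show -(x+s) = -x + -s from by ring, show -(x-s) = -x - -s from by ring]
    exact tl1_key_strict a (-x) (-s) ha (by linarith) (by linarith) (neg_ne_zero.mpr hs0)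

/-- a local minimizer of the unconstrained TL1-regularized problem has
linearly independent columns of `A` on its support; in particular `‖x*‖₀ ≤ rank A`. -/
theorem tl1_unconstrained_local_min_indep
    (M N : ℕ) (A : Matrix (Fin M) (Fin N) ℝ) (y : Fin M → ℝ)
    (a lam : ℝ) (ha : 0 < a) (hlam : 0 < lam)
    (f : (Fin N → ℝ) → ℝ)
    (hf : ∀ x, f x = (1 / 2) * ∑ j, (A.mulVec x j - y j) ^ 2 +
      lam * ∑ i, (a + 1) * |x i| / (a + |x i|))
    (xstar : Fin N → ℝ)
    (hmin : ∃ ε > 0, ∀ x : Fin N → ℝ, ‖x - xstar‖ < ε → f xstar ≤ f x) :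
    LinearIndependent ℝ
      (fun i : {i : Fin N // xstar i ≠ 0} => fun j : Fin M => A j i.1) ∧
    (Finset.univ.filter fun i : Fin N => xstar i ≠ 0).card ≤ A.rank := by
  obtain ⟨ε, hε, hloc⟩ := hmin
  have hli : LinearIndependent ℝ
      (fun i : {i : Fin N // xstar i ≠ 0} => fun j : Fin M => A j i.1) := by
    by_contra hnot
    obtain ⟨g, hsum, i₀, hg⟩ := Fintype.not_linearIndependent_iff.mp hnot
    set v : Fin N → ℝ := fun j => if h : xstar j ≠ 0 then g ⟨j, h⟩ else 0 with hv
    have hv_supp : ∀ j, v j ≠ 0 → xstar j ≠ 0 := by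
      intro j h
      by_contra hx
      apply h
      simp [hv, hx]
    have hvi₀ : v i₀.1 = g i₀ := by simp [hv, i₀.2]
    -- A v = 0
    have hs' : ∀ k, ∑ i : {i : Fin N // xstar i ≠ 0}, g i * A k i.1 = 0 := by
      intro k
      have := congrFun hsum k
      simpa [Finset.sum_apply] using this
    have hAv : ∀ k, A.mulVec v k = 0 := by
      intro k
      have e1 : ∑ j ∈ Finset.univ.filter (fun j => xstar j ≠ 0), A k j * v j
          = ∑ j : Fin N, A k j * v j := by
        apply Finset.sum_subset (Finset.filter_subset _ _)
        intro j _ hj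
        have hvz : v j = 0 := by
          by_contra h
          exact hj (Finset.mem_filter.mpr ⟨Finset.mem_univ _, hv_supp j h⟩)
        simp [hvz]
      have e2 : ∑ j ∈ Finset.univ.filter (fun j => xstar j ≠ 0), A k j * v j
          = ∑ i : {i : Fin N // xstar i ≠ 0}, g i * A k i.1 := by
        rw [Finset.sum_subtype (p := fun j => xstar j ≠ 0)
          (Finset.univ.filter (fun j => xstar j ≠ 0))
          (by intro x; simp) (fun j => A k j * v j)]
        apply Finset.sum_congr rfl
        intro i _
        have : v i.1 = g i := by simp [hv, i.2]
        rw [this]; ring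
      have : A.mulVec v k = ∑ j : Fin N, A k j * v j := by
        simp [Matrix.mulVec, dotProduct]
      rw [this, ← e1, e2, hs' k]
    -- choose the step size
    haveI : Nonempty {i : Fin N // xstar i ≠ 0} := ⟨i₀⟩
    set m : ℝ := Finset.univ.inf' Finset.univ_nonempty
        (fun i : {i : Fin N // xstar i ≠ 0} => |xstar i.1|) with hmdef
    have hm : 0 < m := by
      rw [hmdef, Finset.lt_inf'_iff]
      intro i _
      exact abs_pos.mpr i.2
    have hmle : ∀ i : {i : Fin N // xstar i ≠ 0}, m ≤ |xstar i.1| := by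
      intro i
      exact Finset.inf'_le _ (Finset.mem_univ i)
    set B : ℝ := ‖v‖ + 1 with hBdef
    have hB : 0 < B := by positivity
    have hvB : ‖v‖ < B := by rw [hBdef]; linarith
    set t : ℝ := min ε m / (2 * B) with htdef
    have hminpos : 0 < min ε m := lt_min hε hm
    have ht : 0 < t := by positivity
    have htB : t * B = min ε m / 2 := by
      rw [htdef]; field_simp
    have htv : ∀ j, |t * v j| ≤ m / 2 := by
      intro j
      have h1 : |v j| ≤ ‖v‖ := by
        simpa [Real.norm_eq_abs] using norm_le_pi_norm v j
      have : |t * v j| = t * |v j| := by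
        rw [abs_mul, abs_of_pos ht]
      rw [this]
      calc t * |v j| ≤ t * B := by nlinarith
        _ = min ε m / 2 := htB
        _ ≤ m / 2 := by
            have := min_le_right ε m; linarith
    have hsmall : ∀ j, |t * v j| ≤ |xstar j| := by
      intro j
      by_cases hxj : xstar j ≠ 0
      · calc |t * v j| ≤ m / 2 := htv j
          _ ≤ m := by linarith
          _ ≤ |xstar j| := hmle ⟨j, hxj⟩
      · push_neg at hxj
        have : v j = 0 := by simp [hv, hxj]
        simp [this, abs_nonneg]
    have hnormtv : ‖t • v‖ < ε := by
      have : ‖t • v‖ = t * ‖v‖ := by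
        rw [norm_smul, Real.norm_eq_abs, abs_of_pos ht]
      rw [this]
      calc t * ‖v‖ ≤ t * B := by nlinarith
        _ = min ε m / 2 := htB
        _ < ε := by
            have := min_le_left ε m; linarith
    -- local minimality at the two perturbed points
    have h1 : f xstar ≤ f (xstar + t • v) := by
      apply hloc
      simpa using hnormtv
    have h2 : f xstar ≤ f (xstar - t • v) := by
      apply hloc
      have : xstar - t • v - xstar = -(t • v) := by abel
      rw [this, norm_neg]
      exact hnormtv
    -- the quadratic parts agree
    have hq1 : ∀ k, A.mulVec (xstar + t • v) k = A.mulVec xstar k := by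
      intro k
      rw [Matrix.mulVec_add, Matrix.mulVec_smul]
      simp [hAv k]
    have hq2 : ∀ k, A.mulVec (xstar - t • v) k = A.mulVec xstar k := by
      intro k
      rw [Matrix.mulVec_sub, Matrix.mulVec_smul]
      simp [hAv k]
    -- the penalty strictly decreases on average
    have hpen : ∑ i, ((a+1) * |(xstar + t • v) i| / (a + |(xstar + t • v) i|)
          + (a+1) * |(xstar - t • v) i| / (a + |(xstar - t • v) i|))
        < ∑ i, 2 * ((a+1) * |xstar i| / (a + |xstar i|)) := by
      apply Finset.sum_lt_sum
      · intro i _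
        have := tl1_abs a (xstar i) (t * v i) ha (hsmall i)
        simpa [Pi.add_apply, Pi.sub_apply, Pi.smul_apply, smul_eq_mul] using this
      · refine ⟨i₀.1, Finset.mem_univ _, ?_⟩
        have hts : t * v i₀.1 ≠ 0 := by
          rw [hvi₀]
          exact mul_ne_zero ht.ne' hg
        have := tl1_abs_strict a (xstar i₀.1) (t * v i₀.1) ha (hsmall i₀.1) hts
        simpa [Pi.add_apply, Pi.sub_apply, Pi.smul_apply, smul_eq_mul] using this
    have hfp : f (xstar + t • v) + f (xstar - t • v) < 2 * f xstar := by
      rw [hf, hf, hf]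
      have hq1' : ∑ j, (A.mulVec (xstar + t • v) j - y j) ^ 2
          = ∑ j, (A.mulVec xstar j - y j) ^ 2 := by
        apply Finset.sum_congr rfl; intro j _; rw [hq1 j]
      have hq2' : ∑ j, (A.mulVec (xstar - t • v) j - y j) ^ 2
          = ∑ j, (A.mulVec xstar j - y j) ^ 2 := by
        apply Finset.sum_congr rfl; intro j _; rw [hq2 j]
      rw [hq1', hq2']
      have hsum2 : ∑ i, (a+1) * |(xstar + t • v) i| / (a + |(xstar + t • v) i|)
          + ∑ i, (a+1) * |(xstar - t • v) i| / (a + |(xstar - t • v) i|)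
          < 2 * ∑ i, (a+1) * |xstar i| / (a + |xstar i|) := by
        rw [← Finset.sum_add_distrib, Finset.mul_sum]
        exact hpen
      nlinarith [hsum2]
    linarith
  refine ⟨hli, ?_⟩
  -- cardinality bound: the independent columns live in the range of mulVecLin
  have hmem : ∀ i : {i : Fin N // xstar i ≠ 0},
      (fun j : Fin M => A j i.1) ∈ LinearMap.range A.mulVecLin := by
    intro i
    exact ⟨Pi.single i.1 1, by
      funext j
      simp [Matrix.mulVecLin_apply, Matrix.mulVec_single]⟩
  have hli2 : LinearIndependent ℝ
      (fun i : {i : Fin N // xstar i ≠ 0} =>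
        (⟨fun j : Fin M => A j i.1, hmem i⟩ : LinearMap.range A.mulVecLin)) := by
    apply LinearIndependent.of_comp (LinearMap.range A.mulVecLin).subtype
    exact hli
  have hcard := hli2.fintype_card_le_finrank
  rwa [Fintype.card_subtype] at hcard
end

section
/- Let f(x) = ½‖Ax − y‖₂² + λ P_a(x) with a > 0, y ≠ 0, and initial iterate x⁰ = 0. If λ > ‖y‖₂²/(2(a+1)) and the sequence {x^n} satisfies f(x^n) ≤ f(x⁰) = ½‖y‖₂² for all n ≥ 1, then ‖x^n‖_∞ ≤ a‖y‖₂²/(2λ(a+1) − ‖y‖₂²) for all n ≥ 1; in particular the sequence {x^n} is bounded. -/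
/-- boundedness of DCA iterates when `λ > ‖y‖₂²/(2(a+1))`. -/
theorem tl1_dca_bounded
    (M N : ℕ) (A : Matrix (Fin M) (Fin N) ℝ) (y : Fin M → ℝ) (hy : y ≠ 0)
    (a lam : ℝ) (ha : 0 < a) (hlam : 0 < lam)
    (f : (Fin N → ℝ) → ℝ)
    (hf : ∀ x, f x = (1 / 2) * ∑ j, (A.mulVec x j - y j) ^ 2 +
      lam * ∑ i, (a + 1) * |x i| / (a + |x i|))
    (x : ℕ → Fin N → ℝ) (hx0 : x 0 = 0)
    (hlam2 : lam > (∑ j, (y j) ^ 2) / (2 * (a + 1)))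
    (hdec : ∀ n : ℕ, 1 ≤ n → f (x n) ≤ (1 / 2) * ∑ j, (y j) ^ 2) :
    ∀ n : ℕ, 1 ≤ n → ∀ i : Fin N,
      |x n i| ≤ a * (∑ j, (y j) ^ 2) /
        (2 * lam * (a + 1) - ∑ j, (y j) ^ 2) := by
  intro n hn i
  set Y := ∑ j, (y j) ^ 2 with hYdef
  have hY : 0 ≤ Y := Finset.sum_nonneg fun j _ => sq_nonneg _
  have hD : 0 < 2 * lam * (a + 1) - Y := by
    have h1 : Y / (2 * (a + 1)) < lam := hlam2
    have h2 : 0 < 2 * (a + 1) := by linarith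
    have := (div_lt_iff₀ h2).mp h1
    nlinarith
  -- sum of squares is nonneg
  have hS : 0 ≤ ∑ j, (A.mulVec (x n) j - y j) ^ 2 :=
    Finset.sum_nonneg fun j _ => sq_nonneg _
  have hfle := hdec n hn
  rw [hf] at hfle
  have hP : lam * ∑ i, (a + 1) * |x n i| / (a + |x n i|) ≤ (1 / 2) * Y := by
    nlinarith
  set t := |x n i| with ht
  have htnn : 0 ≤ t := abs_nonneg _
  have hat : 0 < a + t := by linarith
  have hterm : (a + 1) * t / (a + t) ≤ ∑ i, (a + 1) * |x n i| / (a + |x n i|) := by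
    apply Finset.single_le_sum (f := fun i => (a + 1) * |x n i| / (a + |x n i|))
      (fun j _ => ?_) (Finset.mem_univ i)
    apply div_nonneg
    · positivity
    · have := abs_nonneg (x n j); linarith
  have hterm2 : lam * ((a + 1) * t / (a + t)) ≤ (1 / 2) * Y := by
    have := mul_le_mul_of_nonneg_left hterm (le_of_lt hlam)
    linarith
  have hkey : 2 * lam * (a + 1) * t ≤ Y * (a + t) := by
    have h3 : lam * ((a + 1) * t) / (a + t) ≤ (1 / 2) * Y := by
      rw [mul_div_assoc]; exact hterm2
    have h4 := (div_le_iff₀ hat).mp h3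
    nlinarith
  rw [le_div_iff₀ hD]
  nlinarith
end
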